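/- For a vertex v in a finite graph with r(v) ≥ 2 and for any d ≥ 0, if L = f_d(v) − γ̃_{d+1}(v) + (d+2)·(r(v) − n_d(v)) > 0, then the generalized closeness c(v) = (r(v)−1)²/((n−1)·f(v)) satisfies c(v) ≤ (r(v)−1)²/((n−1)·L). -/

import Mathlib

open Finset

variable {V : Type*}

/-- `steps r n v w` : there is a walk of length `n` from `v` to `w` along relation `r`. -/
def steps (r : V → V → Prop) : ℕ → V → V → Prop
  | 0, v, w => v = w
  | n+1, v, w => ∃ u, r v u ∧ steps r n u w

/-- `w` is reachable from `v`. -/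
def reach (r : V → V → Prop) (v w : V) : Prop := ∃ n, steps r n v w

/-- shortest-path distance (number of edges). -/
noncomputable def ddist (r : V → V → Prop) (v w : V) : ℕ := sInf {n | steps r n v w}

open scoped Classical in
/-- set of vertices reachable from `v`. -/
noncomputable def Rset (r : V → V → Prop) [Fintype V] (v : V) : Finset V :=
  univ.filter (fun w => reach r v w)

/-- number of vertices reachable from `v`. -/
noncomputable def rnum (r : V → V → Prop) [Fintype V] (v : V) : ℕ := (Rset r v).card

/-- farness of `v`. -/
noncomputable def farn (r : V → V → Prop) [Fintype V] (v : V) : ℕ :=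
  ∑ w ∈ Rset r v, ddist r v w

open scoped Classical in
/-- ball of radius `d` around `v`. -/
noncomputable def ball (r : V → V → Prop) [Fintype V] (v : V) (d : ℕ) : Finset V :=
  univ.filter (fun w => reach r v w ∧ ddist r v w ≤ d)

/-- number of vertices at distance at most `d` from `v`. -/
noncomputable def nball (r : V → V → Prop) [Fintype V] (v : V) (d : ℕ) : ℕ := (ball r v d).card

open scoped Classical in
/-- set of vertices at distance exactly `d` from `v`. -/
noncomputable def sphere (r : V → V → Prop) [Fintype V] (v : V) (d : ℕ) : Finset V :=
  univ.filter (fun w => reach r v w ∧ ddist r v w = d)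

/-- number of vertices at distance exactly `d` from `v`. -/
noncomputable def gam (r : V → V → Prop) [Fintype V] (v : V) (d : ℕ) : ℕ := (sphere r v d).card

/-- farness of `v` restricted to distance at most `d`. -/
noncomputable def fd (r : V → V → Prop) [Fintype V] (v : V) (d : ℕ) : ℕ :=
  ∑ w ∈ ball r v d, ddist r v w

open scoped Classical in
/-- out-degree of `u`. -/
noncomputable def outdeg (r : V → V → Prop) [Fintype V] (u : V) : ℕ :=
  (univ.filter (fun w => r u w)).card

/-- `gtil r v d` = upper bound γ̃_{d+1}(v) = Σ_{u : dist(v,u)=d} outdeg(u). -/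
noncomputable def gtil (r : V → V → Prop) [Fintype V] (v : V) (d : ℕ) : ℕ :=
  ∑ u ∈ sphere r v d, outdeg r u


/-!
Split the farness at radius `d`: `f(v) = f_d(v) + ∑_{w ∈ R(v) \ B_d(v)} dist(v, w)`. Every vertex
outside the ball is at distance at least `d + 2`, except those of the sphere of radius `d + 1`,
which lie at distance `d + 1`; so the tail sum is at least `(d + 2)(r(v) - n_d(v)) - γ_{d+1}(v)`.
Each vertex at distance `d + 1` is an out-neighbour of a vertex at distance `d`, whence
`γ_{d+1}(v) ≤ γ̃_{d+1}(v)` and `L ≤ f(v)`, which is the claim.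
-/

open scoped Classical

section Walks

variable {r : V → V → Prop}

theorem steps_succ_iff_exists_last {n : ℕ} {v w : V} :
    steps r (n + 1) v w ↔ ∃ u, steps r n v u ∧ r u w := by
  induction n generalizing v with
  | zero =>
    constructor
    · rintro ⟨u, hvu, rfl⟩
      exact ⟨v, rfl, hvu⟩
    · rintro ⟨u, rfl, huw⟩
      exact ⟨w, huw, rfl⟩
  | succ n ih =>
    constructor
    · rintro ⟨u, hvu, huw⟩
      obtain ⟨x, hux, hxw⟩ := ih.mp huw
      exact ⟨x, ⟨u, hvu, hux⟩, hxw⟩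
    · rintro ⟨u, ⟨x, hvx, hxu⟩, huw⟩
      exact ⟨x, hvx, ih.mpr ⟨u, hxu, huw⟩⟩

theorem steps_ddist {v w : V} (h : reach r v w) : steps r (ddist r v w) v w :=
  Nat.sInf_mem h

theorem ddist_le_of_steps {n : ℕ} {v w : V} (h : steps r n v w) : ddist r v w ≤ n :=
  Nat.sInf_le h

end Walks

section Balls

variable [Fintype V] {r : V → V → Prop} {v w : V} {d : ℕ}

@[simp]
theorem mem_Rset : w ∈ Rset r v ↔ reach r v w := by
  simp [Rset]

@[simp]
theorem mem_ball : w ∈ ball r v d ↔ reach r v w ∧ ddist r v w ≤ d := by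
  simp [ball]

@[simp]
theorem mem_sphere : w ∈ sphere r v d ↔ reach r v w ∧ ddist r v w = d := by
  simp [sphere]

theorem ball_subset_Rset : ball r v d ⊆ Rset r v :=
  fun _ hw => mem_Rset.mpr (mem_ball.mp hw).1

theorem exists_mem_sphere_of_mem_sphere_succ (hw : w ∈ sphere r v (d + 1)) :
    ∃ u ∈ sphere r v d, r u w := by
  obtain ⟨hvw, hdist⟩ := mem_sphere.mp hw
  obtain ⟨u, hvu, huw⟩ := steps_succ_iff_exists_last.mp (hdist ▸ steps_ddist hvw)
  have hvu' : reach r v u := ⟨d, hvu⟩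
  have hshort : d ≤ ddist r v u := by
    have := ddist_le_of_steps (steps_succ_iff_exists_last.mpr ⟨u, steps_ddist hvu', huw⟩)
    omega
  exact ⟨u, mem_sphere.mpr ⟨hvu', le_antisymm (ddist_le_of_steps hvu) hshort⟩, huw⟩

theorem gam_succ_le_gtil : gam r v (d + 1) ≤ gtil r v d :=
  calc gam r v (d + 1)
      ≤ ((sphere r v d).biUnion fun u => univ.filter fun w => r u w).card := by
        refine card_le_card fun w hw => ?_
        obtain ⟨u, hu, huw⟩ := exists_mem_sphere_of_mem_sphere_succ hw
        exact mem_biUnion.mpr ⟨u, hu, by simpa using huw⟩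
    _ ≤ ∑ u ∈ sphere r v d, (univ.filter fun w => r u w).card := card_biUnion_le
    _ = gtil r v d := by simp only [gtil, outdeg]

theorem nball_le_rnum : nball r v d ≤ rnum r v :=
  card_le_card ball_subset_Rset

theorem farn_eq_fd_add_sum_sdiff :
    farn r v = fd r v d + ∑ w ∈ Rset r v \ ball r v d, ddist r v w := by
  rw [farn, fd, ← sum_sdiff ball_subset_Rset, add_comm]

theorem add_two_le_ddist_add_ite (hw : w ∈ Rset r v \ ball r v d) :
    d + 2 ≤ ddist r v w + if w ∈ sphere r v (d + 1) then 1 else 0 := by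
  simp only [mem_sdiff, mem_Rset, mem_ball, not_and, not_le] at hw
  have hfar := hw.2 hw.1
  split_ifs with hsph
  · simp only [mem_sphere] at hsph
    omega
  · simp only [mem_sphere, not_and] at hsph
    have := hsph hw.1
    omega

theorem mul_card_sdiff_ball_le :
    (d + 2) * (rnum r v - nball r v d) ≤
      ∑ w ∈ Rset r v \ ball r v d, ddist r v w + gam r v (d + 1) := by
  have hcard : (Rset r v \ ball r v d).card = rnum r v - nball r v d :=
    card_sdiff_of_subset ball_subset_Rset
  calc (d + 2) * (rnum r v - nball r v d)
      = ∑ _w ∈ Rset r v \ ball r v d, (d + 2) := by rw [sum_const, hcard, smul_eq_mul, mul_comm]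
    _ ≤ ∑ w ∈ Rset r v \ ball r v d, (ddist r v w + if w ∈ sphere r v (d + 1) then 1 else 0) :=
        sum_le_sum fun _ hw => add_two_le_ddist_add_ite hw
    _ ≤ ∑ w ∈ Rset r v \ ball r v d, ddist r v w + gam r v (d + 1) := by
        rw [sum_add_distrib, sum_boole, Nat.cast_id]
        exact Nat.add_le_add_left (card_le_card fun _ hw => (mem_filter.mp hw).2) _

theorem fd_add_mul_le_farn_add_gtil :
    fd r v d + (d + 2) * (rnum r v - nball r v d) ≤ farn r v + gtil r v d := by
  have htail := mul_card_sdiff_ball_le (r := r) (v := v) (d := d)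
  have hgam := gam_succ_le_gtil (r := r) (v := v) (d := d)
  rw [farn_eq_fd_add_sum_sdiff (d := d)]
  omega

theorem fd_sub_gtil_add_mul_le_farn :
    (fd r v d : ℝ) - gtil r v d + (d + 2) * ((rnum r v : ℝ) - nball r v d) ≤ farn r v := by
  have hkey : ((fd r v d + (d + 2) * (rnum r v - nball r v d) : ℕ) : ℝ) ≤
      ((farn r v + gtil r v d : ℕ) : ℝ) :=
    Nat.cast_le.mpr fd_add_mul_le_farn_add_gtil
  push_cast [Nat.cast_sub nball_le_rnum] at hkey
  linarith

end Balls

theorem generalized_closeness_upper_bound_general [Fintype V] (r : V → V → Prop) (v : V) (d : ℕ)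
    (hL : 0 < (fd r v d : ℝ) - (gtil r v d : ℝ)
        + (d + 2) * ((rnum r v : ℝ) - (nball r v d : ℝ))) :
    ((rnum r v : ℝ) - 1) ^ 2 / (((Fintype.card V : ℝ) - 1) * (farn r v : ℝ)) ≤
      ((rnum r v : ℝ) - 1) ^ 2 /
        (((Fintype.card V : ℝ) - 1) *
          ((fd r v d : ℝ) - (gtil r v d : ℝ)
            + (d + 2) * ((rnum r v : ℝ) - (nball r v d : ℝ)))) := by
  have hcard : (0 : ℝ) ≤ (Fintype.card V : ℝ) - 1 := by
    have : 1 ≤ Fintype.card V := Fintype.card_pos_iff.mpr ⟨v⟩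
    rw [sub_nonneg]
    exact_mod_cast this
  rw [← div_div, ← div_div]
  exact div_le_div_of_nonneg_left (div_nonneg (sq_nonneg _) hcard) hL fd_sub_gtil_add_mul_le_farn

theorem generalized_closeness_upper_bound [Fintype V] (r : V → V → Prop) (v : V) (d : ℕ)
    (hr : 2 ≤ rnum r v)
    (hL : 0 < (fd r v d : ℝ) - (gtil r v d : ℝ)
        + (d + 2) * ((rnum r v : ℝ) - (nball r v d : ℝ))) :
    ((rnum r v : ℝ) - 1) ^ 2 / (((Fintype.card V : ℝ) - 1) * (farn r v : ℝ)) ≤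
      ((rnum r v : ℝ) - 1) ^ 2 /
        (((Fintype.card V : ℝ) - 1) *
          ((fd r v d : ℝ) - (gtil r v d : ℝ)
            + (d + 2) * ((rnum r v : ℝ) - (nball r v d : ℝ)))) :=
  generalized_closeness_upper_bound_general r v d hL
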